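/- arXiv:2211.15882 — 3 statements merged into one kernel-verified Lean document; each statement's English description precedes it below -/
import Mathlib

section
/- Let D = D_α be the diagonal operator on E_ω associated with a bounded sequence α : ℕ → K, and let μ ∈ K. If the set S = { i ∈ ℕ : α_i = μ } is finite, then the kernel N(μI − D) is a finite-dimensional K-vector space whose dimension equals the cardinality of S. -/
open Filter Topology

/-- The non-Archimedean Hilbert space `E_ω`: the space of sequences `u : ℕ → K`
such that `‖u i‖ * ‖ω i‖^(1/2) → 0`, as a submodule of `ℕ → K`. -/
def Eomega (K : Type*) [NontriviallyNormedField K] (ω : ℕ → K) : Submodule K (ℕ → K) where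
  carrier := {u | Tendsto (fun i => ‖u i‖ * Real.sqrt ‖ω i‖) atTop (𝓝 0)}
  zero_mem' := by simpa using (tendsto_const_nhds : Tendsto (fun _ : ℕ => (0:ℝ)) atTop (𝓝 0))
  add_mem' := by
    intro u v hu hv
    have h := hu.add hv
    rw [add_zero] at h
    refine squeeze_zero (fun i => by positivity) (fun i => ?_) h
    calc ‖(u + v) i‖ * Real.sqrt ‖ω i‖
        ≤ (‖u i‖ + ‖v i‖) * Real.sqrt ‖ω i‖ := by
          have : ‖(u + v) i‖ ≤ ‖u i‖ + ‖v i‖ := by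
            simpa [Pi.add_apply] using norm_add_le (u i) (v i)
          exact mul_le_mul_of_nonneg_right this (Real.sqrt_nonneg _)
      _ = ‖u i‖ * Real.sqrt ‖ω i‖ + ‖v i‖ * Real.sqrt ‖ω i‖ := by ring
  smul_mem' := by
    intro c u hu
    have h := hu.const_mul ‖c‖
    rw [mul_zero] at h
    refine squeeze_zero (fun i => by positivity) (fun i => le_of_eq ?_) h
    simp [Pi.smul_apply, norm_smul, mul_assoc]

lemma Eomega.bddAbove {K : Type*} [NontriviallyNormedField K] {ω : ℕ → K}
    (u : Eomega K ω) :
    BddAbove (Set.range fun i => ‖(u : ℕ → K) i‖ * Real.sqrt ‖ω i‖) :=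
  u.2.bddAbove_range

/-- The sup-norm on `E_ω`: `‖u‖ = sup_i ‖u i‖ * ‖ω i‖^(1/2)`. -/
noncomputable instance Eomega.instSeminormedAddCommGroup
    {K : Type*} [NontriviallyNormedField K] {ω : ℕ → K} :
    SeminormedAddCommGroup (Eomega K ω) :=
  AddGroupSeminorm.toSeminormedAddCommGroup
    { toFun := fun u => ⨆ i, ‖(u : ℕ → K) i‖ * Real.sqrt ‖ω i‖
      map_zero' := by simp
      add_le' := by
        intro u v
        refine ciSup_le fun i => ?_
        calc ‖((u + v : Eomega K ω) : ℕ → K) i‖ * Real.sqrt ‖ω i‖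
            ≤ ‖(u : ℕ → K) i‖ * Real.sqrt ‖ω i‖ + ‖(v : ℕ → K) i‖ * Real.sqrt ‖ω i‖ := by
              have : ‖((u + v : Eomega K ω) : ℕ → K) i‖ ≤ ‖(u : ℕ → K) i‖ + ‖(v : ℕ → K) i‖ := by
                simpa using norm_add_le ((u : ℕ → K) i) ((v : ℕ → K) i)
              nlinarith [Real.sqrt_nonneg ‖ω i‖, norm_nonneg ((u : ℕ → K) i),
                norm_nonneg ((v : ℕ → K) i)]
          _ ≤ _ := add_le_add (le_ciSup (Eomega.bddAbove u) i) (le_ciSup (Eomega.bddAbove v) i)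
      neg' := by intro u; simp }


/-- Shortcut instance making sure that the topology of `E_ω` used below is the
norm topology (and not the topology induced by the product topology on
`ℕ → K`). -/
noncomputable instance (priority := 5000) Eomega.instTopologicalSpace
    {K : Type*} [NontriviallyNormedField K] {ω : ℕ → K} :
    TopologicalSpace (Eomega K ω) :=
  Eomega.instSeminormedAddCommGroup.toUniformSpace.toTopologicalSpace

/-- The diagonal operator `D = D_α` on `E_ω` associated with a bounded
sequence `α : ℕ → K`, given by `(D u) i = α i * u i`. -/
def diagOp {K : Type*} [NontriviallyNormedField K] (ω : ℕ → K) (α : ℕ → K)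
    (hα : ∃ C, ∀ i, ‖α i‖ ≤ C) : Eomega K ω →ₗ[K] Eomega K ω where
  toFun u := ⟨fun i => α i * (u : ℕ → K) i, by
    obtain ⟨C, hC⟩ := hα
    have h := u.2.const_mul C
    rw [mul_zero] at h
    refine squeeze_zero (fun i => by positivity) (fun i => ?_) h
    calc ‖α i * (u : ℕ → K) i‖ * Real.sqrt ‖ω i‖
        = ‖α i‖ * (‖(u : ℕ → K) i‖ * Real.sqrt ‖ω i‖) := by rw [norm_mul]; ring
      _ ≤ C * (‖(u : ℕ → K) i‖ * Real.sqrt ‖ω i‖) :=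
          mul_le_mul_of_nonneg_right (hC i) (by positivity)⟩
  map_add' u v := by
    apply Subtype.ext
    funext i
    simp [mul_add]
  map_smul' c u := by
    apply Subtype.ext
    funext i
    simp [Pi.smul_apply, smul_eq_mul]
    ring

/-
An element of the kernel of `μI − D` satisfies `(μ − α i) u i = 0` for every `i`, so it vanishes
outside `S = {i | α i = μ}`; conversely every sequence vanishing outside `S` lies in the kernel.
When `S` is finite, such sequences are finitely supported, hence automatically in `E_ω`, and
restriction to `S` identifies the kernel with `K^S`.
-/

namespace Eomega

variable {K : Type*} [NontriviallyNormedField K] {ω : ℕ → K}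

lemma mem_of_finite_support {u : ℕ → K} (hu : (Function.support u).Finite) :
    u ∈ Eomega K ω := by
  have hzero : ∀ᶠ i in atTop, u i = 0 := by
    rw [← Nat.cofinite_eq_atTop]
    exact Filter.eventually_cofinite.2 hu
  refine tendsto_const_nhds.congr' (hzero.mono fun i hi => ?_)
  simp [hi]

def supportedOn (S : Set ℕ) : Submodule K (Eomega K ω) where
  carrier := {u | ∀ i ∉ S, (u : ℕ → K) i = 0}
  zero_mem' _ _ := rfl
  add_mem' hu hv i hi := by simp [hu i hi, hv i hi]
  smul_mem' c u hu i hi := by simp [hu i hi]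

lemma mem_supportedOn {S : Set ℕ} {u : Eomega K ω} :
    u ∈ supportedOn S ↔ ∀ i ∉ S, (u : ℕ → K) i = 0 :=
  Iff.rfl

def restrictSupportedOn (S : Set ℕ) : supportedOn (ω := ω) S →ₗ[K] (S → K) where
  toFun u i := ((u : Eomega K ω) : ℕ → K) i
  map_add' _ _ := rfl
  map_smul' _ _ := rfl

lemma restrictSupportedOn_injective (S : Set ℕ) :
    Function.Injective (restrictSupportedOn (ω := ω) S) := by
  intro u v huv
  ext i
  by_cases hi : i ∈ S
  · exact congrFun huv ⟨i, hi⟩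
  · rw [u.2 i hi, v.2 i hi]

open Classical in
lemma restrictSupportedOn_surjective {S : Set ℕ} (hS : S.Finite) :
    Function.Surjective (restrictSupportedOn (ω := ω) S) := by
  intro g
  let w : ℕ → K := fun i => if h : i ∈ S then g ⟨i, h⟩ else 0
  have hw_support : Function.support w ⊆ S := fun i hi => by
    by_contra h
    exact hi (dif_neg h)
  refine ⟨⟨⟨w, mem_of_finite_support (hS.subset hw_support)⟩, fun i hi => dif_neg hi⟩, ?_⟩
  funext i
  exact dif_pos i.2

noncomputable def supportedOnEquiv {S : Set ℕ} (hS : S.Finite) :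
    supportedOn (ω := ω) S ≃ₗ[K] (S → K) :=
  LinearEquiv.ofBijective (restrictSupportedOn S)
    ⟨restrictSupportedOn_injective S, restrictSupportedOn_surjective hS⟩

lemma finiteDimensional_supportedOn {S : Set ℕ} (hS : S.Finite) :
    FiniteDimensional K (supportedOn (ω := ω) S) :=
  have := hS.to_subtype
  Module.Finite.equiv (supportedOnEquiv hS).symm

lemma finrank_supportedOn {S : Set ℕ} (hS : S.Finite) :
    Module.finrank K (supportedOn (ω := ω) S) = S.ncard := by
  have := hS.fintype
  rw [(supportedOnEquiv hS).finrank_eq, Module.finrank_fintype_fun_eq_card,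
    Fintype.card_eq_nat_card, Nat.card_coe_set_eq]

end Eomega

lemma coe_smul_id_sub_diagOp_apply {K : Type*} [NontriviallyNormedField K] {ω α : ℕ → K}
    (hα : ∃ C, ∀ i, ‖α i‖ ≤ C) (μ : K) (u : Eomega K ω) (i : ℕ) :
    ((μ • LinearMap.id - diagOp ω α hα : Eomega K ω →ₗ[K] Eomega K ω) u : ℕ → K) i =
      (μ - α i) * (u : ℕ → K) i := by
  simp [diagOp, sub_mul]

lemma ker_smul_id_sub_diagOp {K : Type*} [NontriviallyNormedField K] {ω α : ℕ → K}
    (hα : ∃ C, ∀ i, ‖α i‖ ≤ C) (μ : K) :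
    LinearMap.ker (μ • LinearMap.id - diagOp ω α hα) = Eomega.supportedOn {i | α i = μ} := by
  ext u
  rw [LinearMap.mem_ker, Eomega.mem_supportedOn, Subtype.ext_iff, funext_iff]
  refine forall_congr' fun i => ?_
  rw [coe_smul_id_sub_diagOp_apply, ZeroMemClass.coe_zero, Pi.zero_apply, mul_eq_zero,
    sub_eq_zero, eq_comm, or_iff_not_imp_left, Set.mem_ofPred_eq]

theorem stmt5_general {K : Type*} [NontriviallyNormedField K]
    (ω : ℕ → K)
    (α : ℕ → K) (hα : ∃ C, ∀ i, ‖α i‖ ≤ C) (μ : K)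
    (hS : {i : ℕ | α i = μ}.Finite) :
    FiniteDimensional K (LinearMap.ker (μ • LinearMap.id - diagOp ω α hα)) ∧
    Module.finrank K (LinearMap.ker (μ • LinearMap.id - diagOp ω α hα)) =
      {i : ℕ | α i = μ}.ncard := by
  rw [ker_smul_id_sub_diagOp]
  exact ⟨Eomega.finiteDimensional_supportedOn hS, Eomega.finrank_supportedOn hS⟩

/-- If `S = {i | α i = μ}` is finite, then `N(μI − D)` is a
finite-dimensional `K`-vector space of dimension `card S`. -/
theorem stmt5 {K : Type*} [NontriviallyNormedField K] [CompleteSpace K]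
    (hna : ∀ x y : K, ‖x + y‖ ≤ max ‖x‖ ‖y‖)
    (ω : ℕ → K) (hω : ∀ i, ω i ≠ 0)
    (α : ℕ → K) (hα : ∃ C, ∀ i, ‖α i‖ ≤ C) (μ : K)
    (hS : {i : ℕ | α i = μ}.Finite) :
    FiniteDimensional K (LinearMap.ker (μ • LinearMap.id - diagOp ω α hα)) ∧
    Module.finrank K (LinearMap.ker (μ • LinearMap.id - diagOp ω α hα)) =
      {i : ℕ | α i = μ}.ncard :=
  stmt5_general ω α hα μ hS
end

section
/- Let D = D_α be the diagonal operator on E_ω associated with a bounded sequence α : ℕ → K, and let μ ∈ K be an eigenvalue of D of finite multiplicity (the set { i : α_i = μ } is nonempty and finite) that is isolated from the other diagonal entries (there exists ε > 0 with ‖μ − α_i‖ ≥ ε for every i with α_i ≠ μ). Then R(μI − D) = N(μI − D)^⊥, where the orthogonal is taken with respect to the bilinear form ⟨u, v⟩ = Σ_{i=0}^∞ ω_i u_i v_i; in particular R(μI − D) is closed in E_ω. -/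
open Filter Topology

/-- The bilinear pairing `⟨u,v⟩ = Σ'_i ω i * u i * v i` on `E_ω`. -/
noncomputable def pair {K : Type*} [NontriviallyNormedField K] (ω : ℕ → K)
    (u v : Eomega K ω) : K :=
  ∑' i, ω i * ((u : ℕ → K) i * (v : ℕ → K) i)

/-- The orthogonal set `F^⊥` of a subspace `F` of `E_ω` with respect to the
pairing `⟨·,·⟩`. -/
def orthSet {K : Type*} [NontriviallyNormedField K] (ω : ℕ → K)
    (F : Submodule K (Eomega K ω)) : Set (Eomega K ω) :=
  {v | ∀ u ∈ F, pair ω u v = 0}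

/-! The key to the proof is that on `E_ω` both sides are the sequences vanishing on
`S = {i | α i = μ}`. The range contains them because, away from `S`, `1 / (μ - α i)` is bounded by
`1 / ε`, so dividing coordinatewise stays in `E_ω`. The orthogonal consists of them because the
kernel is made of the sequences supported on `S`, it contains the basis vectors `e_i` with `i ∈ S`,
and `⟨e_i, v⟩ = ω_i v_i` with `ω_i ≠ 0`.
Closedness follows since coordinate evaluations are continuous. -/

section

variable {K : Type*} [NontriviallyNormedField K] {ω : ℕ → K}

namespace Eomega

theorem mul_mem {c u : ℕ → K} (hc : ∃ C, ∀ i, ‖c i‖ ≤ C) (hu : u ∈ Eomega K ω) :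
    c * u ∈ Eomega K ω := by
  obtain ⟨C, hC⟩ := hc
  have h : Tendsto (fun i => C * (‖u i‖ * Real.sqrt ‖ω i‖)) atTop (𝓝 0) := by
    simpa using (show Tendsto (fun i => ‖u i‖ * Real.sqrt ‖ω i‖) atTop (𝓝 0) from hu).const_mul C
  refine squeeze_zero (fun i => by positivity) (fun i => ?_) h
  calc ‖(c * u) i‖ * Real.sqrt ‖ω i‖ = ‖c i‖ * (‖u i‖ * Real.sqrt ‖ω i‖) := by
        rw [Pi.mul_apply, norm_mul, mul_assoc]
    _ ≤ C * (‖u i‖ * Real.sqrt ‖ω i‖) := by gcongr; exact hC i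

theorem single_mem (i : ℕ) : Pi.single i (1 : K) ∈ Eomega K ω := by
  show Tendsto (fun j => ‖(Pi.single i (1 : K) : ℕ → K) j‖ * Real.sqrt ‖ω j‖) atTop (𝓝 0)
  refine tendsto_const_nhds.congr' ?_
  filter_upwards [eventually_gt_atTop i] with j hj
  simp [Pi.single_eq_of_ne hj.ne']

theorem norm_apply_mul_sqrt_le (v : Eomega K ω) (j : ℕ) :
    ‖(v : ℕ → K) j‖ * Real.sqrt ‖ω j‖ ≤ ‖v‖ :=
  le_ciSup (Eomega.bddAbove v) j

theorem continuous_apply {j : ℕ} (hωj : ω j ≠ 0) :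
    Continuous fun v : Eomega K ω => (v : ℕ → K) j := by
  have hsqrt : 0 < Real.sqrt ‖ω j‖ := Real.sqrt_pos.mpr (norm_pos_iff.mpr hωj)
  let coord : Eomega K ω →+ K :=
    { toFun := fun v => (v : ℕ → K) j
      map_zero' := rfl
      map_add' := fun _ _ => rfl }
  refine AddMonoidHomClass.continuous_of_bound coord (Real.sqrt ‖ω j‖)⁻¹ fun v => ?_
  rw [inv_mul_eq_div, le_div_iff₀ hsqrt]
  exact norm_apply_mul_sqrt_le v j

theorem isClosed_setOf_forall_apply_eq_zero (hω : ∀ i, ω i ≠ 0) (s : Set ℕ) :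
    IsClosed {v : Eomega K ω | ∀ i ∈ s, (v : ℕ → K) i = 0} := by
  simp only [Set.ofPred_forall]
  exact isClosed_biInter fun i _ => isClosed_eq (continuous_apply (hω i)) continuous_const

end Eomega

theorem pair_single_left (v : Eomega K ω) (i : ℕ) :
    pair ω ⟨Pi.single i 1, Eomega.single_mem i⟩ v = ω i * (v : ℕ → K) i := by
  rw [pair, tsum_eq_single i fun j hj => by simp [Pi.single_eq_of_ne hj]]
  simp

theorem pair_eq_zero_of_mul_eq_zero {u v : Eomega K ω}
    (h : ∀ i, (u : ℕ → K) i * (v : ℕ → K) i = 0) : pair ω u v = 0 := by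
  simp [pair, h]

variable {α : ℕ → K} (hα : ∃ C, ∀ i, ‖α i‖ ≤ C) {μ : K}

theorem sub_diagOp_apply (u : Eomega K ω) (i : ℕ) :
    (((μ • LinearMap.id - diagOp ω α hα : Eomega K ω →ₗ[K] Eomega K ω) u : Eomega K ω) :
        ℕ → K) i = (μ - α i) * (u : ℕ → K) i :=
  (sub_mul μ (α i) _).symm

theorem mem_ker_sub_diagOp_iff {u : Eomega K ω} :
    u ∈ LinearMap.ker (μ • LinearMap.id - diagOp ω α hα) ↔
      ∀ i, α i ≠ μ → (u : ℕ → K) i = 0 := by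
  rw [LinearMap.mem_ker, ← Subtype.coe_inj, funext_iff]
  refine forall_congr' fun i => ?_
  rw [sub_diagOp_apply]
  simp [sub_eq_zero, eq_comm (a := μ), or_iff_not_imp_left]

theorem range_sub_diagOp (hiso : ∃ ε > 0, ∀ i : ℕ, α i ≠ μ → ε ≤ ‖μ - α i‖) :
    (LinearMap.range (μ • LinearMap.id - diagOp ω α hα) : Set (Eomega K ω)) =
      {v : Eomega K ω | ∀ i, α i = μ → (v : ℕ → K) i = 0} := by
  obtain ⟨ε, hε, hsep⟩ := hiso
  ext v
  constructor
  · rintro ⟨u, rfl⟩ i hi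
    rw [sub_diagOp_apply, hi, sub_self, zero_mul]
  · intro hv
    -- on `α i = μ` the inverse `(μ - α i)⁻¹` is the junk value `0`, which is harmless there
    have hbound : ∀ i, ‖(μ - α i)⁻¹‖ ≤ ε⁻¹ := fun i => by
      by_cases hi : α i = μ
      · simpa [hi] using hε.le
      · rw [norm_inv]
        exact inv_anti₀ hε (hsep i hi)
    refine ⟨⟨_, Eomega.mul_mem ⟨ε⁻¹, hbound⟩ v.2⟩, Subtype.ext (funext fun i => ?_)⟩
    rw [sub_diagOp_apply]
    change (μ - α i) * ((μ - α i)⁻¹ * _) = _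
    rw [← mul_assoc]
    by_cases hi : α i = μ
    · simp [hi, hv i hi]
    · rw [mul_inv_cancel₀ (sub_ne_zero.mpr (Ne.symm hi)), one_mul]

theorem orthSet_ker_sub_diagOp (hω : ∀ i, ω i ≠ 0) :
    orthSet ω (LinearMap.ker (μ • LinearMap.id - diagOp ω α hα)) =
      {v : Eomega K ω | ∀ i, α i = μ → (v : ℕ → K) i = 0} := by
  ext v
  constructor
  · intro hv i hi
    have hker : (⟨Pi.single i 1, Eomega.single_mem i⟩ : Eomega K ω) ∈
        LinearMap.ker (μ • LinearMap.id - diagOp ω α hα) :=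
      (mem_ker_sub_diagOp_iff hα).mpr fun j hj =>
        Pi.single_eq_of_ne (fun hji => hj (by rwa [hji])) 1
    have h := hv _ hker
    rw [pair_single_left] at h
    exact (mul_eq_zero.mp h).resolve_left (hω i)
  · intro hv u hu
    refine pair_eq_zero_of_mul_eq_zero fun i => ?_
    by_cases hi : α i = μ
    · rw [hv i hi, mul_zero]
    · rw [(mem_ker_sub_diagOp_iff hα).mp hu i hi, zero_mul]

end

theorem stmt10_general {K : Type*} [NontriviallyNormedField K]
    (ω : ℕ → K) (hω : ∀ i, ω i ≠ 0)
    (α : ℕ → K) (hα : ∃ C, ∀ i, ‖α i‖ ≤ C) (μ : K)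
    (hiso : ∃ ε > 0, ∀ i : ℕ, α i ≠ μ → ε ≤ ‖μ - α i‖) :
    (LinearMap.range (μ • LinearMap.id - diagOp ω α hα) : Set (Eomega K ω)) =
      orthSet ω (LinearMap.ker (μ • LinearMap.id - diagOp ω α hα)) ∧
    IsClosed (LinearMap.range (μ • LinearMap.id - diagOp ω α hα) : Set (Eomega K ω)) := by
  have hrange := range_sub_diagOp (ω := ω) hα hiso
  exact ⟨hrange.trans (orthSet_ker_sub_diagOp hα hω).symm,
    hrange ▸ Eomega.isClosed_setOf_forall_apply_eq_zero hω {i | α i = μ}⟩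

/-- If `μ` is an eigenvalue of `D` of finite multiplicity which
is isolated from the other diagonal entries, then
`R(μI − D) = N(μI − D)^⊥`; in particular `R(μI − D)` is closed in `E_ω`. -/
theorem stmt10 {K : Type*} [NontriviallyNormedField K] [CompleteSpace K]
    (hna : ∀ x y : K, ‖x + y‖ ≤ max ‖x‖ ‖y‖)
    (ω : ℕ → K) (hω : ∀ i, ω i ≠ 0)
    (α : ℕ → K) (hα : ∃ C, ∀ i, ‖α i‖ ≤ C) (μ : K)
    (hS : {i : ℕ | α i = μ}.Nonempty) (hSfin : {i : ℕ | α i = μ}.Finite)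
    (hiso : ∃ ε > 0, ∀ i : ℕ, α i ≠ μ → ε ≤ ‖μ - α i‖) :
    (LinearMap.range (μ • LinearMap.id - diagOp ω α hα) : Set (Eomega K ω)) =
      orthSet ω (LinearMap.ker (μ • LinearMap.id - diagOp ω α hα)) ∧
    IsClosed (LinearMap.range (μ • LinearMap.id - diagOp ω α hα) : Set (Eomega K ω)) :=
  stmt10_general ω hω α hα μ hiso
end

section
/- Let D = D_α be the diagonal operator on E_ω associated with a bounded sequence α : ℕ → K, and let μ ∈ K. If μ does not belong to the closure of Λ = { α_i : i ∈ ℕ } in K (equivalently, there exists ε > 0 with ‖μ − α_i‖ ≥ ε for all i ∈ ℕ), then μI − D is bijective and has a bounded inverse; in particular μ ∉ σ(D). -/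
open Filter Topology

/-- The spectrum of `D`: those `μ` such that `μ·I − D` has no bounded (i.e.
continuous) two-sided inverse. -/
def specSet {K : Type*} [NontriviallyNormedField K] {ω : ℕ → K}
    (D : Eomega K ω →ₗ[K] Eomega K ω) : Set K :=
  {μ | ¬ ∃ S : Eomega K ω →ₗ[K] Eomega K ω, Continuous S ∧
        S ∘ₗ (μ • LinearMap.id - D) = LinearMap.id ∧
        (μ • LinearMap.id - D) ∘ₗ S = LinearMap.id}

section Diagonal

variable {K : Type*} [NontriviallyNormedField K] {ω : ℕ → K}

theorem Eomega.norm_apply_mul_le (u : Eomega K ω) (i : ℕ) :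
    ‖(u : ℕ → K) i‖ * Real.sqrt ‖ω i‖ ≤ ‖u‖ :=
  le_ciSup (Eomega.bddAbove u) i

@[simp]
theorem diagOp_apply (α : ℕ → K) (hα : ∃ C, ∀ i, ‖α i‖ ≤ C) (u : Eomega K ω) (i : ℕ) :
    ((diagOp ω α hα u : Eomega K ω) : ℕ → K) i = α i * (u : ℕ → K) i :=
  rfl

theorem norm_diagOp_apply_le {α : ℕ → K} (hα : ∃ C, ∀ i, ‖α i‖ ≤ C) {C : ℝ}
    (hC : ∀ i, ‖α i‖ ≤ C) (u : Eomega K ω) :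
    ‖diagOp ω α hα u‖ ≤ C * ‖u‖ := by
  have hC₀ : 0 ≤ C := (norm_nonneg _).trans (hC 0)
  refine ciSup_le fun i => ?_
  calc ‖α i * (u : ℕ → K) i‖ * Real.sqrt ‖ω i‖
      = ‖α i‖ * (‖(u : ℕ → K) i‖ * Real.sqrt ‖ω i‖) := by rw [norm_mul, mul_assoc]
    _ ≤ C * ‖u‖ := mul_le_mul (hC i) (Eomega.norm_apply_mul_le u i) (by positivity) hC₀

theorem continuous_diagOp (α : ℕ → K) (hα : ∃ C, ∀ i, ‖α i‖ ≤ C) :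
    Continuous (diagOp ω α hα) :=
  let ⟨C, hC⟩ := hα
  AddMonoidHomClass.continuous_of_bound _ C (norm_diagOp_apply_le hα hC)

theorem diagOp_comp_diagOp_eq_id {α β : ℕ → K} (hα : ∃ C, ∀ i, ‖α i‖ ≤ C)
    (hβ : ∃ C, ∀ i, ‖β i‖ ≤ C) (h : ∀ i, α i * β i = 1) :
    diagOp ω α hα ∘ₗ diagOp ω β hβ = LinearMap.id := by
  ext u i
  simp [← mul_assoc, h]

theorem smul_id_sub_diagOp (μ : K) {α : ℕ → K} (hα : ∃ C, ∀ i, ‖α i‖ ≤ C)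
    (hμα : ∃ C, ∀ i, ‖μ - α i‖ ≤ C) :
    μ • LinearMap.id - diagOp ω α hα = diagOp ω (fun i => μ - α i) hμα := by
  ext u i
  simp [sub_mul]

end Diagonal

theorem exists_pos_le_norm_sub_of_notMem_closure_range {E ι : Type*} [SeminormedAddCommGroup E]
    {α : ι → E} {μ : E} (hμ : μ ∉ closure (Set.range α)) :
    ∃ ε > 0, ∀ i, ε ≤ ‖μ - α i‖ := by
  rw [Metric.mem_closure_iff] at hμ
  push Not at hμ
  obtain ⟨ε, hε, hball⟩ := hμ
  exact ⟨ε, hε, fun i => by simpa [dist_eq_norm] using hball (α i) ⟨i, rfl⟩⟩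

theorem stmt13_general {K : Type*} [NontriviallyNormedField K]
    (ω : ℕ → K)
    (α : ℕ → K) (hα : ∃ C, ∀ i, ‖α i‖ ≤ C) (μ : K)
    (hμ : μ ∉ closure (Set.range α)) :
    Function.Bijective
      ⇑(μ • (LinearMap.id : Eomega K ω →ₗ[K] Eomega K ω) - diagOp ω α hα) ∧
    (∃ S : Eomega K ω →ₗ[K] Eomega K ω, Continuous S ∧
      S ∘ₗ (μ • LinearMap.id - diagOp ω α hα) = LinearMap.id ∧
      (μ • LinearMap.id - diagOp ω α hα) ∘ₗ S = LinearMap.id) ∧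
    μ ∉ specSet (diagOp ω α hα) := by
  obtain ⟨ε, hε, hεle⟩ := exists_pos_le_norm_sub_of_notMem_closure_range hμ
  have hne : ∀ i, μ - α i ≠ 0 := fun i => norm_pos_iff.mp (hε.trans_le (hεle i))
  have hμα : ∃ C, ∀ i, ‖μ - α i‖ ≤ C :=
    let ⟨C, hC⟩ := hα
    ⟨‖μ‖ + C, fun i => (norm_sub_le _ _).trans (add_le_add_right (hC i) _)⟩
  have hinv : ∃ C, ∀ i, ‖(μ - α i)⁻¹‖ ≤ C :=
    ⟨ε⁻¹, fun i => by rw [norm_inv]; exact inv_anti₀ hε (hεle i)⟩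
  set S := diagOp ω (fun i => (μ - α i)⁻¹) hinv
  have hST : S ∘ₗ (μ • LinearMap.id - diagOp ω α hα) = LinearMap.id := by
    rw [smul_id_sub_diagOp μ hα hμα]
    exact diagOp_comp_diagOp_eq_id _ _ fun i => inv_mul_cancel₀ (hne i)
  have hTS : (μ • LinearMap.id - diagOp ω α hα) ∘ₗ S = LinearMap.id := by
    rw [smul_id_sub_diagOp μ hα hμα]
    exact diagOp_comp_diagOp_eq_id _ _ fun i => mul_inv_cancel₀ (hne i)
  have hS : ∃ S : Eomega K ω →ₗ[K] Eomega K ω, Continuous S ∧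
      S ∘ₗ (μ • LinearMap.id - diagOp ω α hα) = LinearMap.id ∧
      (μ • LinearMap.id - diagOp ω α hα) ∘ₗ S = LinearMap.id :=
    ⟨S, continuous_diagOp _ _, hST, hTS⟩
  exact ⟨Function.bijective_iff_has_inverse.mpr
      ⟨S, fun u => LinearMap.congr_fun hST u, fun u => LinearMap.congr_fun hTS u⟩,
    hS, not_not.mpr hS⟩

/-- If `μ` does not lie in the closure of `Λ = {α i : i ∈ ℕ}`,
then `μI − D` is bijective with a bounded inverse; in particular `μ ∉ σ(D)`. -/
theorem stmt13 {K : Type*} [NontriviallyNormedField K] [CompleteSpace K]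
    (hna : ∀ x y : K, ‖x + y‖ ≤ max ‖x‖ ‖y‖)
    (ω : ℕ → K) (hω : ∀ i, ω i ≠ 0)
    (α : ℕ → K) (hα : ∃ C, ∀ i, ‖α i‖ ≤ C) (μ : K)
    (hμ : μ ∉ closure (Set.range α)) :
    Function.Bijective
      ⇑(μ • (LinearMap.id : Eomega K ω →ₗ[K] Eomega K ω) - diagOp ω α hα) ∧
    (∃ S : Eomega K ω →ₗ[K] Eomega K ω, Continuous S ∧
      S ∘ₗ (μ • LinearMap.id - diagOp ω α hα) = LinearMap.id ∧
      (μ • LinearMap.id - diagOp ω α hα) ∘ₗ S = LinearMap.id) ∧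
    μ ∉ specSet (diagOp ω α hα) :=
  stmt13_general ω α hα μ hμ
end
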